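/- Let D be a τ-atomic integral domain with τ symmetric, refinable, and associate preserving. If G_τ(x) is connected for every x ∈ D^#, then G_τ(x) is a finite pseudoclique for every x ∈ D^#, and in particular G̅_τ(x) ≅ K_n for some finite n depending on x. -/

import Mathlib

/-- `a` is a nonzero nonunit, i.e. an element of `D^#`. -/
def NzNonunit {D : Type*} [CommRing D] (a : D) : Prop := a ≠ 0 ∧ ¬ IsUnit a

/-- `l` is the list of factors of a `τ`-factorization of `a`:
`a = λ * l.prod` for a unit `λ`, the factors are nonzero nonunits and pairwise `τ`-related. -/
def TauFact {D : Type*} [CommRing D] (τ : D → D → Prop) (l : List D) (a : D) : Prop :=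
  l ≠ [] ∧ (∀ b ∈ l, NzNonunit b) ∧ l.Pairwise τ ∧ ∃ u : Dˣ, a = (u : D) * l.prod

/-- `b` τ-divides `a`: `b` occurs as a factor in some τ-factorization of `a`. -/
def TauDvd {D : Type*} [CommRing D] (τ : D → D → Prop) (b a : D) : Prop :=
  ∃ l, TauFact τ l a ∧ b ∈ l

/-- `a` is τ-irreducible (a τ-atom): all its τ-factorizations are trivial. -/
def TauIrred {D : Type*} [CommRing D] (τ : D → D → Prop) (a : D) : Prop :=
  NzNonunit a ∧ ∀ l, TauFact τ l a → l.length = 1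

/-- `l` is a τ-atomic factorization of `a`. -/
def TauAtomicFact {D : Type*} [CommRing D] (τ : D → D → Prop) (l : List D) (a : D) : Prop :=
  TauFact τ l a ∧ ∀ b ∈ l, TauIrred τ b

/-- `D` is τ-atomic: every nonzero nonunit has a τ-atomic factorization. -/
def TauAtomic {D : Type*} [CommRing D] (τ : D → D → Prop) : Prop :=
  ∀ a : D, NzNonunit a → ∃ l, TauAtomicFact τ l a

def TauSymm {D : Type*} [CommRing D] (τ : D → D → Prop) : Prop :=
  ∀ a b, τ a b → τ b a

/-- τ is associate preserving. -/
def TauAssocPres {D : Type*} [CommRing D] (τ : D → D → Prop) : Prop :=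
  ∀ a b b' : D, τ a b → Associated b b' → τ a b'

/-- τ is refinable: replacing each factor of a τ-factorization by a
τ-factorization of it again yields a τ-factorization. -/
def TauRefinable {D : Type*} [CommRing D] (τ : D → D → Prop) : Prop :=
  ∀ (a : D) (l : List D) (F : List (List D)),
    TauFact τ l a → List.Forall₂ (fun b m => TauFact τ m b) l F →
    TauFact τ F.flatten a

/-- `a` is a vertex of the τ-irreducible divisor graph `G_τ(x)`. -/
def GVert {D : Type*} [CommRing D] (τ : D → D → Prop) (x a : D) : Prop :=
  TauIrred τ a ∧ TauDvd τ a x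

/-- `a` and `b` are adjacent (distinct, i.e. non-associated, vertices joined by an edge)
in `G_τ(x)`: some τ-factorization of `x` contains associates of both. -/
def GAdj {D : Type*} [CommRing D] (τ : D → D → Prop) (x a b : D) : Prop :=
  GVert τ x a ∧ GVert τ x b ∧ ¬ Associated a b ∧
  ∃ l, TauFact τ l x ∧ (∃ a' ∈ l, Associated a a') ∧ (∃ b' ∈ l, Associated b b')

/-- `G_τ(x)` is connected (vertices are taken up to associates). -/
def GConnected {D : Type*} [CommRing D] (τ : D → D → Prop) (x : D) : Prop :=
  ∀ a b, GVert τ x a → GVert τ x b →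
    Relation.ReflTransGen (fun u v => GAdj τ x u v ∨ Associated u v) a b

/-- The reduced graph `G̅_τ(x)` (loops deleted) is connected; loops do not affect
connectivity, so this is connectivity with respect to the same adjacency relation. -/
def GBarConnected {D : Type*} [CommRing D] (τ : D → D → Prop) (x : D) : Prop :=
  ∀ a b, GVert τ x a → GVert τ x b →
    Relation.ReflTransGen (fun u v => GAdj τ x u v ∨ Associated u v) a b

/-- `G_τ(x)` is a pseudoclique: any two non-associated vertices are adjacent.
(Equivalently, the reduced graph `G̅_τ(x)` is a clique / complete graph.) -/
def GPseudoclique {D : Type*} [CommRing D] (τ : D → D → Prop) (x : D) : Prop :=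
  ∀ a b, GVert τ x a → GVert τ x b → ¬ Associated a b → GAdj τ x a b

/-- `Diam(G_τ(x)) ≤ 1`: any two vertices are equal (associated) or adjacent. -/
def GDiamLeOne {D : Type*} [CommRing D] (τ : D → D → Prop) (x : D) : Prop :=
  ∀ a b, GVert τ x a → GVert τ x b → Associated a b ∨ GAdj τ x a b

/-- `G_τ(x)` has finitely many vertices (up to associates). -/
def GVertFinite {D : Type*} [CommRing D] (τ : D → D → Prop) (x : D) : Prop :=
  ∃ s : Finset D, ∀ a, GVert τ x a → ∃ c ∈ s, Associated a c

/-- The vertex `a` of `G_τ(x)` has finite degree: finitely many adjacent vertices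
up to associates (loops not counted). -/
def GDegFinite {D : Type*} [CommRing D] (τ : D → D → Prop) (x a : D) : Prop :=
  ∃ s : Finset D, ∀ b, GAdj τ x a b → ∃ c ∈ s, Associated b c

/-- The vertex `a` of `G_τ(x)` carries finitely many loops: there is a uniform bound on
the number of occurrences of associates of `a` in τ-atomic factorizations of `x`. -/
def GLoopsFinite {D : Type*} [CommRing D] (τ : D → D → Prop) (x a : D) : Prop :=
  ∃ N : ℕ, ∀ l m : List D, TauAtomicFact τ l x → m.Sublist l →
    (∀ b ∈ m, Associated a b) → m.length ≤ N

/-- `D` satisfies τ-ACCP. -/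
def TauACCP {D : Type*} [CommRing D] (τ : D → D → Prop) : Prop :=
  ∀ a : ℕ → D, (∀ i, TauDvd τ (a (i + 1)) (a i)) →
    ∃ N, ∀ i, N ≤ i → Associated (a i) (a N)

/-- `D` is a τ-UFD. -/
def TauUFD {D : Type*} [CommRing D] (τ : D → D → Prop) : Prop :=
  TauAtomic τ ∧ ∀ (x : D) (l₁ l₂ : List D), TauAtomicFact τ l₁ x → TauAtomicFact τ l₂ x →
    Multiset.Rel Associated (l₁ : Multiset D) (l₂ : Multiset D)

/-- `D` is a τ-FFD: each nonzero nonunit has only finitely many τ-factorizations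
up to rearrangement and associates. -/
def TauFFD {D : Type*} [CommRing D] (τ : D → D → Prop) : Prop :=
  ∀ x : D, NzNonunit x → ∃ S : Finset (Multiset D),
    ∀ l : List D, TauFact τ l x → ∃ m ∈ S, Multiset.Rel Associated (l : Multiset D) m

/-- `D` is a τ-WFFD: each nonzero nonunit has finitely many τ-divisors up to associates. -/
def TauWFFD {D : Type*} [CommRing D] (τ : D → D → Prop) : Prop :=
  ∀ x : D, NzNonunit x → ∃ s : Finset D,
    ∀ b, TauDvd τ b x → ∃ c ∈ s, Associated b c

/-- `D` is a τ-idf domain: each nonzero nonunit has finitely many τ-irreducible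
τ-divisors up to associates. -/
def TauIdf {D : Type*} [CommRing D] (τ : D → D → Prop) : Prop :=
  ∀ x : D, NzNonunit x → ∃ s : Finset D,
    ∀ b, TauIrred τ b → TauDvd τ b x → ∃ c ∈ s, Associated b c

/-!
Connectedness of every `G_τ(y)` forces `D` to be a τ-UFD, by induction on the length of a
τ-atomic factorization `p` of `x`. If another τ-atomic factorization `q` shares an atom with `p`
up to associates, cancel it and apply induction. In general, join an atom of `p` to an atom of `q`
by a path in `G_τ(x)`: an edge is witnessed by a τ-factorization of `x`, which refines to a
τ-atomic one; if it shares an atom with `p` it agrees with `p`, so every vertex on the path is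
associated to an atom of `p`, and in particular `q` shares an atom with `p`.

Once factorizations are unique, every vertex of `G_τ(x)` is associated to an atom of one fixed
τ-atomic factorization of `x`, which is finite and joins any two of them by an edge.
-/

theorem Multiset.Rel.associated_symm {M : Type*} [Monoid M] {s t : Multiset M}
    (h : Multiset.Rel Associated s t) : Multiset.Rel Associated t s :=
  Multiset.rel_flip.1 (h.mono fun _ _ _ _ hab => hab.symm)

section Factorizations

variable {D : Type*} [CommRing D] {τ : D → D → Prop}

theorem NzNonunit.of_associated {a b : D} (ha : NzNonunit a) (hab : Associated a b) :
    NzNonunit b :=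
  ⟨fun hb => ha.1 (hab.eq_zero_iff.2 hb), fun hb => ha.2 (hab.isUnit_iff.2 hb)⟩

theorem TauFact.associated_prod {l : List D} {x : D} (h : TauFact τ l x) :
    Associated l.prod x := by
  obtain ⟨-, -, -, u, hu⟩ := h
  exact ⟨u, by rw [hu, mul_comm]⟩

theorem TauFact.of_associated {l : List D} {a b : D} (h : TauFact τ l a)
    (hab : Associated a b) : TauFact τ l b := by
  obtain ⟨hne, hmem, hpw, u, rfl⟩ := h
  obtain ⟨w, rfl⟩ := hab
  exact ⟨hne, hmem, hpw, u * w, by push_cast; ring⟩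

theorem TauAtomicFact.of_associated {l : List D} {a b : D} (h : TauAtomicFact τ l a)
    (hab : Associated a b) : TauAtomicFact τ l b :=
  ⟨h.1.of_associated hab, h.2⟩

theorem TauIrred.of_associated {a b : D} (h : TauIrred τ a) (hab : Associated a b) :
    TauIrred τ b :=
  ⟨h.1.of_associated hab, fun l hl => h.2 l (hl.of_associated hab.symm)⟩

theorem TauAtomicFact.sublist {l m : List D} {x : D} (h : TauAtomicFact τ l x)
    (hml : m.Sublist l) (hm : m ≠ []) : TauAtomicFact τ m m.prod :=
  ⟨⟨hm, fun b hb => h.1.2.1 b (hml.subset hb), h.1.2.2.1.sublist hml, 1, by simp⟩,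
    fun b hb => h.2 b (hml.subset hb)⟩

theorem TauFact.exists_tauAtomicFact (hatomic : TauAtomic τ) (href : TauRefinable τ)
    {l : List D} {x : D} (hl : TauFact τ l x) :
    ∃ r, TauAtomicFact τ r x ∧ ∀ c ∈ l, TauIrred τ c → ∃ c' ∈ r, Associated c' c := by
  choose! g hg using hatomic
  have hF : List.Forall₂ (fun b m => TauFact τ m b) l (l.map g) :=
    List.forall₂_map_right_iff.2 (List.forall₂_same.2 fun b hb => (hg b (hl.2.1 b hb)).1)
  refine ⟨(l.map g).flatten, ⟨href x l _ hl hF, ?_⟩, fun c hc hirr => ?_⟩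
  · simp only [List.mem_flatten, List.mem_map]
    rintro c ⟨_, ⟨b, hb, rfl⟩, hcb⟩
    exact (hg b (hl.2.1 b hb)).2 c hcb
  · have hgc := hg c (hl.2.1 c hc)
    obtain ⟨e, he⟩ := List.length_eq_one_iff.1 (hirr.2 _ hgc.1)
    refine ⟨e, List.mem_flatten.2 ⟨g c, List.mem_map_of_mem hc, by simp [he]⟩, ?_⟩
    simpa [he] using hgc.1.associated_prod

/-- A τ-atomic factorization of length one makes `x` itself τ-irreducible. -/
theorem TauAtomicFact.rel_of_length_eq_one {p q : List D} {x : D} (hp : TauAtomicFact τ p x)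
    (hq : TauFact τ q x) (hp1 : p.length = 1) :
    Multiset.Rel Associated (p : Multiset D) (q : Multiset D) := by
  obtain ⟨a, rfl⟩ := List.length_eq_one_iff.1 hp1
  have hax : Associated a x := by simpa using hp.1.associated_prod
  obtain ⟨b, rfl⟩ := List.length_eq_one_iff.1 (((hp.2 a (by simp)).of_associated hax).2 q hq)
  have hbx : Associated b x := by simpa using hq.associated_prod
  simpa using Multiset.Rel.cons (hax.trans hbx.symm) Multiset.Rel.zero

/-- Walking along a path of `G_τ(x)`, each new vertex shares a τ-atomic factorization of `x`
with the previous one, hence inherits an associate in `p`. -/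
theorem exists_associated_mem_of_reflTransGen (hatomic : TauAtomic τ)
    (href : TauRefinable τ) {p : List D} {x a c : D}
    (hshared : ∀ r, TauAtomicFact τ r x → ∀ a ∈ p, ∀ b ∈ r, Associated a b →
      Multiset.Rel Associated (r : Multiset D) (p : Multiset D))
    (ha : ∃ a' ∈ p, Associated a a')
    (hac : Relation.ReflTransGen (fun u v => GAdj τ x u v ∨ Associated u v) a c) :
    ∃ c' ∈ p, Associated c c' := by
  induction hac with
  | refl => exact ha
  | tail _ hstep ih =>
    obtain ⟨m', hm', hmm'⟩ := ih
    rcases hstep with ⟨vm, vc, -, l, hl, ⟨m₁, hm₁, hmm₁⟩, ⟨c₁, hc₁, hcc₁⟩⟩ | hassoc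
    · obtain ⟨r, hr, hlr⟩ := hl.exists_tauAtomicFact hatomic href
      obtain ⟨m₂, hm₂, hm₂m₁⟩ := hlr m₁ hm₁ (vm.1.of_associated hmm₁)
      obtain ⟨c₂, hc₂, hc₂c₁⟩ := hlr c₁ hc₁ (vc.1.of_associated hcc₁)
      have hrp := hshared r hr m' hm' m₂ hm₂ (hmm'.symm.trans (hmm₁.trans hm₂m₁.symm))
      obtain ⟨c', hc', hc₂c'⟩ := Multiset.exists_mem_of_rel_of_mem hrp hc₂
      exact ⟨c', hc', hcc₁.trans (hc₂c₁.symm.trans hc₂c')⟩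
    · exact ⟨m', hm', hassoc.symm.trans hmm'⟩

end Factorizations

section Uniqueness

variable {D : Type*} [CommRing D] [IsDomain D] {τ : D → D → Prop}

theorem TauFact.nzNonunit {l : List D} {x : D} (h : TauFact τ l x) : NzNonunit x := by
  refine NzNonunit.of_associated ⟨List.prod_ne_zero fun h0 => (h.2.1 0 h0).1 rfl, ?_⟩
    h.associated_prod
  obtain ⟨b, hb⟩ := List.exists_mem_of_ne_nil l h.1
  exact fun hu => (h.2.1 b hb).2 (List.prod_isUnit_iff.1 hu b hb)

theorem TauAtomicFact.erase_of_associated [DecidableEq D] {p q : List D} {x a b : D}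
    (hp : TauAtomicFact τ p x) (hq : TauAtomicFact τ q x) (ha : a ∈ p) (hb : b ∈ q)
    (hab : Associated a b) (hpa : p.erase a ≠ []) (hqb : q.erase b ≠ []) :
    TauAtomicFact τ (p.erase a) (p.erase a).prod ∧
      TauAtomicFact τ (q.erase b) (p.erase a).prod := by
  have hprod : Associated (a * (p.erase a).prod) (b * (q.erase b).prod) := by
    rw [List.prod_erase ha, List.prod_erase hb]
    exact hp.1.associated_prod.trans hq.1.associated_prod.symm
  exact ⟨hp.sublist (List.erase_sublist) hpa, (hq.sublist (List.erase_sublist) hqb).of_associated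
    (hprod.of_mul_left hab (hp.1.2.1 a ha).1).symm⟩

/-- Cancel the common atom and use uniqueness for the shorter factorizations. -/
theorem TauAtomicFact.rel_of_associated_mem {p q : List D} {x a b : D}
    (ih : ∀ (y : D) (p' q' : List D), TauAtomicFact τ p' y → TauAtomicFact τ q' y →
      p'.length < p.length → Multiset.Rel Associated (p' : Multiset D) (q' : Multiset D))
    (hp : TauAtomicFact τ p x) (hq : TauAtomicFact τ q x) (ha : a ∈ p) (hb : b ∈ q)
    (hab : Associated a b) : Multiset.Rel Associated (p : Multiset D) (q : Multiset D) := by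
  classical
  by_cases hp1 : p.length = 1
  · exact hp.rel_of_length_eq_one hq.1 hp1
  by_cases hq1 : q.length = 1
  · exact (hq.rel_of_length_eq_one hp.1 hq1).associated_symm
  have hpa := List.length_erase_of_mem ha
  have hqb := List.length_erase_of_mem hb
  have hp0 := List.length_pos_iff.2 hp.1.1
  have hq0 := List.length_pos_iff.2 hq.1.1
  obtain ⟨hp', hq'⟩ := hp.erase_of_associated hq ha hb hab
    (List.ne_nil_of_length_pos (by omega)) (List.ne_nil_of_length_pos (by omega))
  have hrel := ih _ _ _ hp' hq' (by omega)
  rw [← Multiset.coe_erase, ← Multiset.coe_erase] at hrel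
  rw [← Multiset.cons_erase (Multiset.mem_coe.2 ha), ← Multiset.cons_erase (Multiset.mem_coe.2 hb)]
  exact hrel.cons hab

theorem tauUFD_of_gConnected (href : TauRefinable τ) (hatomic : TauAtomic τ)
    (hconn : ∀ x : D, NzNonunit x → GConnected τ x) : TauUFD τ := by
  refine ⟨hatomic, fun x p q hp hq => ?_⟩
  induction hn : p.length using Nat.strong_induction_on generalizing x p q with
  | _ n ih =>
    have hshared : ∀ r, TauAtomicFact τ r x → ∀ a ∈ p, ∀ b ∈ r, Associated a b →
        Multiset.Rel Associated (p : Multiset D) (r : Multiset D) :=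
      fun r hr a ha b hb hab => hp.rel_of_associated_mem
        (fun y p' q' hp' hq' hlt => ih _ (hn ▸ hlt) y p' q' hp' hq' rfl) hr ha hb hab
    obtain ⟨a, ha⟩ := List.exists_mem_of_ne_nil p hp.1.1
    obtain ⟨b, hb⟩ := List.exists_mem_of_ne_nil q hq.1.1
    have hpath := hconn x hp.1.nzNonunit a b ⟨hp.2 a ha, p, hp.1, ha⟩ ⟨hq.2 b hb, q, hq.1, hb⟩
    obtain ⟨c, hc, hbc⟩ := exists_associated_mem_of_reflTransGen hatomic href
      (fun r hr a ha b hb hab => (hshared r hr a ha b hb hab).associated_symm)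
      ⟨a, ha, Associated.refl a⟩ hpath
    exact hshared q hq c hc b hb hbc.symm

end Uniqueness

section Graph

variable {D : Type*} [CommRing D] {τ : D → D → Prop}

theorem TauUFD.exists_associated_mem_of_gVert (hufd : TauUFD τ) (href : TauRefinable τ)
    {l : List D} {x a : D} (hl : TauAtomicFact τ l x) (ha : GVert τ x a) :
    ∃ c ∈ l, Associated a c := by
  obtain ⟨hairr, m, hm, ham⟩ := ha
  obtain ⟨r, hr, hmr⟩ := hm.exists_tauAtomicFact hufd.1 href
  obtain ⟨a', ha', ha'a⟩ := hmr a ham hairr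
  obtain ⟨c, hc, ha'c⟩ := Multiset.exists_mem_of_rel_of_mem (hufd.2 x r l hr hl) ha'
  exact ⟨c, hc, ha'a.symm.trans ha'c⟩

theorem gPseudoclique_of_forall_gVert {l : List D} {x : D} (hl : TauFact τ l x)
    (h : ∀ a, GVert τ x a → ∃ c ∈ l, Associated a c) : GPseudoclique τ x :=
  fun a b ha hb hab => ⟨ha, hb, hab, l, hl, h a ha, h b hb⟩

theorem gVertFinite_of_forall_gVert [DecidableEq D] {l : List D} {x : D}
    (h : ∀ a, GVert τ x a → ∃ c ∈ l, Associated a c) : GVertFinite τ x :=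
  ⟨l.toFinset, fun a ha => by simpa using h a ha⟩

end Graph

theorem stmt14_general {D : Type*} [CommRing D] [IsDomain D] (τ : D → D → Prop)
    (href : TauRefinable τ)
    (hatomic : TauAtomic τ)
    (hconn : ∀ x : D, NzNonunit x → GConnected τ x) :
    ∀ x : D, NzNonunit x → GPseudoclique τ x ∧ GVertFinite τ x := by
  classical
  have hufd := tauUFD_of_gConnected href hatomic hconn
  intro x hx
  obtain ⟨l, hl⟩ := hatomic x hx
  have hvert : ∀ a, GVert τ x a → ∃ c ∈ l, Associated a c :=
    fun _ => hufd.exists_associated_mem_of_gVert href hl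
  exact ⟨gPseudoclique_of_forall_gVert hl.1 hvert, gVertFinite_of_forall_gVert hvert⟩

theorem stmt14 {D : Type*} [CommRing D] [IsDomain D] (τ : D → D → Prop)
    (hsym : TauSymm τ) (href : TauRefinable τ) (hap : TauAssocPres τ)
    (hatomic : TauAtomic τ)
    (hconn : ∀ x : D, NzNonunit x → GConnected τ x) :
    ∀ x : D, NzNonunit x → GPseudoclique τ x ∧ GVertFinite τ x :=
  stmt14_general τ href hatomic hconn
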